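/- arXiv:1905.08251 — 2 statements merged into one kernel-verified Lean document; each statement's English description precedes it below -/
import Mathlib

section
/- Let A be a linear operator on ℂ^d whose spectrum does not intersect the unit circle {z ∈ ℂ : |z| = 1}. Then the system x_{n+1} = A x_n, n ≥ 0, has the ℓ^∞-Lipschitz shadowing property (Hyers–Ulam stability): there exists L > 0 such that for every ε > 0 and every sequence (y_n)_{n≥0} ⊂ ℂ^d with sup_{n≥0} ‖y_{n+1} − A y_n‖ ≤ Lε, there exists a sequence (x_n)_{n≥0} ⊂ ℂ^d with x_{n+1} = A x_n for all n ≥ 0 and sup_{n≥0} ‖x_n − y_n‖ ≤ ε. -/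
open Filter Module Submodule Function Set

section Aux

variable {E : Type*} [NormedAddCommGroup E] [NormedSpace ℂ E] [FiniteDimensional ℂ E]

lemma clm_mem_spectrum_iff (T : E →L[ℂ] E) (μ : ℂ) :
    μ ∈ spectrum ℂ T ↔ ∃ v : E, v ≠ 0 ∧ T v = μ • v := by
  have : CompleteSpace E := FiniteDimensional.complete ℂ E
  rw [spectrum.mem_iff, ContinuousLinearMap.isUnit_iff_bijective]
  have key : ∀ w : E, (algebraMap ℂ (E →L[ℂ] E) μ - T) w = μ • w - T w := by
    intro w
    simp [Algebra.algebraMap_eq_smul_one]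
  constructor
  · intro h
    by_contra hc
    push_neg at hc
    have hinj : Function.Injective ⇑(algebraMap ℂ (E →L[ℂ] E) μ - T) := by
      intro a b hab
      by_contra hne
      have h1 : (algebraMap ℂ (E →L[ℂ] E) μ - T) (a - b) = 0 := by
        rw [map_sub, hab, sub_self]
      rw [key, sub_eq_zero] at h1
      exact hc (a - b) (sub_ne_zero.mpr hne) h1.symm
    have hsurj : Function.Surjective ⇑(algebraMap ℂ (E →L[ℂ] E) μ - T) := by
      have := (LinearMap.injective_iff_surjective
        (f := ((algebraMap ℂ (E →L[ℂ] E) μ - T) : E →ₗ[ℂ] E))).mp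
      exact this hinj
    exact h ⟨hinj, hsurj⟩
  · rintro ⟨v, hv, hTv⟩ ⟨hinj, _⟩
    apply hv
    have : (algebraMap ℂ (E →L[ℂ] E) μ - T) v = (algebraMap ℂ (E →L[ℂ] E) μ - T) 0 := by
      rw [key, key, hTv, sub_self, smul_zero, map_zero, sub_zero]
    exact hinj this

lemma clm_pow_decay (T : E →L[ℂ] E) (hT : ∀ μ ∈ spectrum ℂ T, ‖μ‖ < 1) :
    ∃ C θ : ℝ, 0 < C ∧ 0 ≤ θ ∧ θ < 1 ∧ ∀ n : ℕ, ‖T ^ n‖ ≤ C * θ ^ n := by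
  have : CompleteSpace E := FiniteDimensional.complete ℂ E
  by_cases hE : Subsingleton E
  · refine ⟨1, 1/2, one_pos, by norm_num, by norm_num, fun n => ?_⟩
    have : (T ^ n) = 0 := Subsingleton.elim _ _
    rw [this, norm_zero]
    positivity
  · have : Nontrivial E := not_subsingleton_iff_nontrivial.mp hE
    have : Nontrivial (E →L[ℂ] E) := by
      refine ⟨1, 0, fun h => ?_⟩
      obtain ⟨v, hv⟩ := exists_ne (0 : E)
      apply hv
      calc v = (1 : E →L[ℂ] E) v := rfl
        _ = (0 : E →L[ℂ] E) v := by rw [h]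
        _ = 0 := rfl
    -- spectral radius < 1
    obtain ⟨k, hk, hkr⟩ := spectrum.exists_nnnorm_eq_spectralRadius_of_nonempty
      (spectrum.nonempty T)
    have hrad : spectralRadius ℂ T < 1 := by
      rw [← hkr]
      exact_mod_cast hT k hk
    obtain ⟨t, ht1, ht2⟩ := ENNReal.lt_iff_exists_nnreal_btwn.mp hrad
    have ht2' : (t : ℝ) < 1 := by exact_mod_cast ht2
    -- Gelfand
    have hg := spectrum.pow_nnnorm_pow_one_div_tendsto_nhds_spectralRadius T
    have hev : ∀ᶠ n : ℕ in atTop, (‖T ^ n‖₊ : ENNReal) ^ (1 / (n:ℝ)) < (t : ENNReal) :=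
      hg.eventually_lt_const ht1
    obtain ⟨N, hN⟩ := (hev.and (eventually_ge_atTop 1)).exists_forall_of_atTop
    set θ : ℝ := max (t : ℝ) (1/2) with hθdef
    have hθ0 : (0:ℝ) < θ := lt_of_lt_of_le (by norm_num) (le_max_right _ _)
    have hθ1 : θ < 1 := max_lt ht2' (by norm_num)
    have hbound : ∀ n, N ≤ n → ‖T ^ n‖ ≤ θ ^ n := by
      intro n hn
      obtain ⟨h1, h2⟩ := hN n hn
      have hn0 : (0:ℝ) < n := by exact_mod_cast h2
      -- from h1 : ‖T^n‖₊ ^ (1/n) < t in ℝ≥0∞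
      have h3 : (‖T ^ n‖₊ : ENNReal) < (t : ENNReal) ^ (n : ℝ) := by
        have := ENNReal.rpow_lt_rpow h1 hn0
        rwa [← ENNReal.rpow_mul, one_div,
          inv_mul_cancel₀ (ne_of_gt hn0), ENNReal.rpow_one] at this
      have h4 : ‖T ^ n‖ < (t : ℝ) ^ (n : ℝ) := by
        have := h3
        rw [← ENNReal.coe_rpow_of_nonneg _ (le_of_lt hn0), ENNReal.coe_lt_coe] at this
        have h5 : (‖T ^ n‖₊ : ℝ) < ((t ^ (n:ℝ) : NNReal) : ℝ) := this
        rwa [NNReal.coe_rpow] at h5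
      rw [Real.rpow_natCast] at h4
      calc ‖T ^ n‖ ≤ (t:ℝ) ^ n := le_of_lt h4
        _ ≤ θ ^ n := pow_le_pow_left₀ t.2 (le_max_left _ _) n
    -- constant for small n
    set C : ℝ := 1 + ∑ m ∈ Finset.range (N + 1), ‖T ^ m‖ / θ ^ m with hCdef
    have hC1 : (1:ℝ) ≤ C := by
      have : (0:ℝ) ≤ ∑ m ∈ Finset.range (N + 1), ‖T ^ m‖ / θ ^ m :=
        Finset.sum_nonneg fun m _ => div_nonneg (norm_nonneg _) (le_of_lt (pow_pos hθ0 m))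
      rw [hCdef]
      linarith
    refine ⟨C, θ, lt_of_lt_of_le one_pos hC1, le_of_lt hθ0, hθ1, fun n => ?_⟩
    rcases le_or_gt N n with h | h
    · calc ‖T ^ n‖ ≤ θ ^ n := hbound n h
        _ = 1 * θ ^ n := (one_mul _).symm
        _ ≤ C * θ ^ n := by
          apply mul_le_mul_of_nonneg_right hC1 (le_of_lt (pow_pos hθ0 n))
    · have hmem : n ∈ Finset.range (N + 1) := Finset.mem_range.mpr (by omega)
      have : ‖T ^ n‖ / θ ^ n ≤ C := by
        have hle : ‖T ^ n‖ / θ ^ n ≤ ∑ m ∈ Finset.range (N + 1), ‖T ^ m‖ / θ ^ m :=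
          Finset.single_le_sum (f := fun m => ‖T ^ m‖ / θ ^ m)
            (fun m _ => div_nonneg (norm_nonneg _) (le_of_lt (pow_pos hθ0 m))) hmem
        rw [hCdef]
        linarith
      calc ‖T ^ n‖ = (‖T ^ n‖ / θ ^ n) * θ ^ n := by
            field_simp
        _ ≤ C * θ ^ n := mul_le_mul_of_nonneg_right this (le_of_lt (pow_pos hθ0 n))

set_option maxHeartbeats 2000000 in
lemma exists_green (T : E →L[ℂ] E) (hT : ∀ z ∈ spectrum ℂ T, ‖z‖ ≠ 1) :
    ∃ (Gp Gm : ℕ → E →L[ℂ] E) (C θ : ℝ), 0 < C ∧ 0 ≤ θ ∧ θ < 1 ∧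
      (∀ w, Gp 0 w + Gm 0 w = w) ∧
      (∀ m w, T (Gp m w) = Gp (m + 1) w) ∧
      (∀ m w, T (Gm (m + 1) w) = Gm m w) ∧
      (∀ m, ‖Gp m‖ ≤ C * θ ^ m) ∧ (∀ m, ‖Gm m‖ ≤ C * θ ^ m) := by
  set f : Module.End ℂ E := (T : E →ₗ[ℂ] E) with hfdef
  have hfT : ∀ v : E, f v = T v := fun v => rfl
  set sS : Set ℂ := {μ : ℂ | ‖μ‖ < 1} with hsS
  set sU : Set ℂ := {μ : ℂ | 1 < ‖μ‖} with hsU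
  set S : Submodule ℂ E := ⨆ μ ∈ sS, f.maxGenEigenspace μ with hSdef
  set U : Submodule ℂ E := ⨆ μ ∈ sU, f.maxGenEigenspace μ with hUdef
  -- eigenvectors can't lie in sups over sets not containing their eigenvalue
  have hev : ∀ (μ : ℂ) (v : E), v ≠ 0 → f v = μ • v → ∀ s : Set ℂ, μ ∉ s →
      v ∉ (⨆ ν ∈ s, f.maxGenEigenspace ν) := by
    intro μ v hv hfv s hμs hvmem
    have hvμ : v ∈ f.maxGenEigenspace μ := by
      rw [Module.End.mem_maxGenEigenspace]
      refine ⟨1, ?_⟩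
      simp [pow_one, LinearMap.sub_apply, hfv]
    have hd := (f.independent_maxGenEigenspace).disjoint_biSup hμs
    exact hv (Submodule.disjoint_def.mp hd v hvμ hvmem)
  -- invariance
  have hmap : ∀ (s : Set ℂ) (v : E), v ∈ (⨆ ν ∈ s, f.maxGenEigenspace ν) →
      f v ∈ (⨆ ν ∈ s, f.maxGenEigenspace ν) := by
    intro s v hv
    have hle : Submodule.map f (⨆ ν ∈ s, f.maxGenEigenspace ν) ≤
        ⨆ ν ∈ s, f.maxGenEigenspace ν := by
      rw [Submodule.map_iSup]
      refine iSup_le fun ν => ?_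
      rw [Submodule.map_iSup]
      refine iSup_le fun hν => le_trans ?_ (le_biSup _ hν)
      rw [Submodule.map_le_iff_le_comap]
      intro x hx
      exact Module.End.mapsTo_maxGenEigenspace_of_comm (Commute.refl f) ν hx
    exact hle ⟨v, hv, rfl⟩
  have hSmap : MapsTo f S S := fun v hv => hmap sS v hv
  have hUmap : MapsTo f U U := fun v hv => hmap sU v hv
  -- S ⊔ U = ⊤
  have hSU : S ⊔ U = ⊤ := by
    rw [eq_top_iff, ← Module.End.iSup_maxGenEigenspace_eq_top f]
    refine iSup_le fun μ => ?_
    by_cases hb : f.maxGenEigenspace μ = ⊥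
    · simp [hb]
    · obtain ⟨v, hvmem, hv0⟩ := Submodule.exists_mem_ne_zero_of_ne_bot hb
      -- v is a generalized eigenvector; get an actual eigenvalue via spectrum
      have hμeig : f.HasEigenvalue μ :=
        Module.End.HasUnifEigenvalue.lt zero_lt_one
          (show f.HasUnifEigenvalue μ ⊤ from hb)
      obtain ⟨w, hw⟩ := hμeig.exists_hasEigenvector
      have hμspec : μ ∈ spectrum ℂ T :=
        (clm_mem_spectrum_iff T μ).mpr ⟨w, hw.2, hw.apply_eq_smul⟩
      rcases lt_or_gt_of_ne (hT μ hμspec) with h1 | h1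
      · exact le_trans (le_biSup _ (by exact h1)) le_sup_left
      · exact le_trans (le_biSup _ (by exact h1)) le_sup_right
  -- disjointness
  have hdisj : Disjoint S U := by
    rw [disjoint_iff]
    by_contra hW
    set W : Submodule ℂ E := S ⊓ U with hWdef
    have hWmap : MapsTo f W W := fun v hv => ⟨hSmap hv.1, hUmap hv.2⟩
    have : Nontrivial W := Submodule.nontrivial_iff_ne_bot.mpr hW
    set fW : Module.End ℂ W := f.restrict hWmap with hfW
    obtain ⟨μ, hμ⟩ := Module.End.exists_eigenvalue fW
    obtain ⟨v, hv⟩ := hμ.exists_hasEigenvector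
    have hvE : f (v : E) = μ • (v : E) := by
      have := hv.apply_eq_smul
      calc f (v : E) = ((fW v : W) : E) := rfl
        _ = μ • (v : E) := by rw [this]; rfl
    have hv0 : (v : E) ≠ 0 := fun h => hv.2 (by exact_mod_cast Subtype.ext h)
    rcases lt_or_ge ‖μ‖ 1 with h1 | h1
    · exact hev μ v hv0 hvE sU
        (by intro h; rw [hsU, Set.mem_setOf_eq] at h; linarith) v.2.2
    · exact hev μ v hv0 hvE sS
        (by intro h; rw [hsS, Set.mem_setOf_eq] at h; linarith) v.2.1
  have hcompl : IsCompl S U := ⟨hdisj, codisjoint_iff.mpr hSU⟩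
  -- projections
  set πS : E →ₗ[ℂ] S := S.linearProjOfIsCompl U hcompl with hπS
  set πU : E →ₗ[ℂ] U := U.linearProjOfIsCompl S hcompl.symm with hπU
  have hPQ : ∀ x : E, ((πS x : E)) + ((πU x : E)) = x := fun x =>
    Submodule.projection_add_projection_eq_self hcompl x
  set PC : E →L[ℂ] S := LinearMap.toContinuousLinearMap πS with hPC
  set QC : E →L[ℂ] U := LinearMap.toContinuousLinearMap πU with hQC
  -- stable restriction
  set fS : Module.End ℂ S := f.restrict hSmap with hfS
  set AS : S →L[ℂ] S := LinearMap.toContinuousLinearMap fS with hAS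
  have hAScoe : ∀ u : S, ((AS u : S) : E) = T (u : E) := fun u => rfl
  have hASspec : ∀ μ ∈ spectrum ℂ AS, ‖μ‖ < 1 := by
    intro μ hμ
    obtain ⟨v, hv0, hveq⟩ := (clm_mem_spectrum_iff AS μ).mp hμ
    by_contra hc
    push_neg at hc
    have hvE : f (v : E) = μ • (v : E) := by
      calc f (v : E) = ((AS v : S) : E) := rfl
        _ = μ • (v : E) := by rw [hveq]; rfl
    refine hev μ (v : E) (fun h => hv0 (by exact_mod_cast Subtype.ext h)) hvE sS
      (by intro h; rw [hsS, Set.mem_setOf_eq] at h; linarith) v.2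
  obtain ⟨CS, θS, hCS, hθS0, hθS1, hASpow⟩ := clm_pow_decay AS hASspec
  -- unstable restriction and its inverse
  set fU : Module.End ℂ U := f.restrict hUmap with hfU
  have hUinj : Function.Injective fU := by
    rw [← LinearMap.ker_eq_bot, eq_bot_iff]
    intro v hv
    rw [LinearMap.mem_ker] at hv
    rw [Submodule.mem_bot]
    by_contra hv0
    have hvE : f (v : E) = (0 : ℂ) • (v : E) := by
      rw [zero_smul]
      calc f (v : E) = ((fU v : U) : E) := rfl
        _ = 0 := by rw [hv]; rfl
    exact hev 0 (v : E) (fun h => hv0 (by exact_mod_cast Subtype.ext h)) hvE sU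
      (by intro h; rw [hsU, Set.mem_setOf_eq] at h; simp at h; linarith) v.2
  have hUbij : Function.Bijective fU := ⟨hUinj, (LinearMap.injective_iff_surjective).mp hUinj⟩
  set eU : U ≃ₗ[ℂ] U := LinearEquiv.ofBijective fU hUbij with heU
  have heUapp : ∀ u : U, eU u = fU u := fun u => rfl
  set B : U →L[ℂ] U := LinearMap.toContinuousLinearMap (eU.symm : U →ₗ[ℂ] U) with hB
  have hBapp : ∀ u : U, B u = eU.symm u := fun u => rfl
  have hfUB : ∀ u : U, fU (B u) = u := by
    intro u
    rw [hBapp, ← heUapp, eU.apply_symm_apply]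
  have hBspec : ∀ ν ∈ spectrum ℂ B, ‖ν‖ < 1 := by
    intro ν hν
    obtain ⟨v, hv0, hveq⟩ := (clm_mem_spectrum_iff B ν).mp hν
    have hν0 : ν ≠ 0 := by
      intro h
      rw [h, zero_smul] at hveq
      exact hv0 (by rw [← hfUB v, hveq, map_zero])
    have hfv : fU v = ν⁻¹ • v := by
      have h1 : v = ν • fU v := by
        conv_lhs => rw [← hfUB v, hveq, map_smul]
      calc fU v = ν⁻¹ • (ν • fU v) := by rw [smul_smul, inv_mul_cancel₀ hν0, one_smul]
        _ = ν⁻¹ • v := by rw [← h1]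
    by_contra hc
    push_neg at hc
    have hvE : f (v : E) = ν⁻¹ • (v : E) := by
      calc f (v : E) = ((fU v : U) : E) := rfl
        _ = ν⁻¹ • (v : E) := by rw [hfv]; rfl
    have hinv : ‖ν⁻¹‖ ≤ 1 := by
      rw [norm_inv]
      exact inv_le_one_of_one_le₀ hc
    exact hev ν⁻¹ (v : E) (fun h => hv0 (by exact_mod_cast Subtype.ext h)) hvE sU
      (by intro h; rw [hsU, Set.mem_setOf_eq] at h; linarith) v.2
  obtain ⟨CU, θU, hCU, hθU0, hθU1, hBpow⟩ := clm_pow_decay B hBspec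
  -- Green's functions
  set Gp : ℕ → E →L[ℂ] E := fun m => S.subtypeL ∘L ((AS ^ m) ∘L PC) with hGp
  set Gm : ℕ → E →L[ℂ] E := fun m => U.subtypeL ∘L ((B ^ m) ∘L QC) with hGm
  set C : ℝ := CS * (‖PC‖ + 1) + CU * (‖QC‖ + 1) with hC
  set θ : ℝ := max θS θU with hθ
  have hC0 : 0 < C := by
    have h1 : 0 < CS * (‖PC‖ + 1) := mul_pos hCS (by positivity)
    have h2 : 0 < CU * (‖QC‖ + 1) := mul_pos hCU (by positivity)
    rw [hC]; linarith
  have hθ0 : 0 ≤ θ := le_trans hθS0 (le_max_left _ _)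
  have hθ1 : θ < 1 := max_lt hθS1 hθU1
  refine ⟨Gp, Gm, C, θ, hC0, hθ0, hθ1, ?_, ?_, ?_, ?_, ?_⟩
  · intro w
    show ((((AS ^ 0) (PC w) : S)) : E) + (((B ^ 0) (QC w) : U) : E) = w
    rw [pow_zero, pow_zero]
    exact hPQ w
  · intro m w
    show T (((AS ^ m) (PC w) : S) : E) = (((AS ^ (m + 1)) (PC w) : S) : E)
    rw [← hAScoe ((AS ^ m) (PC w))]
    congr 1
    rw [pow_succ']
    rfl
  · intro m w
    show T (((B ^ (m + 1)) (QC w) : U) : E) = (((B ^ m) (QC w) : U) : E)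
    have h1 : T ((((B ^ (m + 1)) (QC w) : U)) : E) = ((fU ((B ^ (m + 1)) (QC w)) : U) : E) := rfl
    rw [h1]
    congr 1
    rw [pow_succ']
    show fU (B ((B ^ m) (QC w))) = (B ^ m) (QC w)
    exact hfUB _
  · intro m
    refine ContinuousLinearMap.opNorm_le_bound _ (by positivity) fun w => ?_
    show ‖(((AS ^ m) (PC w) : S) : E)‖ ≤ C * θ ^ m * ‖w‖
    rw [Submodule.norm_coe]
    calc ‖(AS ^ m) (PC w)‖ ≤ ‖AS ^ m‖ * ‖PC w‖ := ContinuousLinearMap.le_opNorm _ _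
      _ ≤ (CS * θS ^ m) * (‖PC‖ * ‖w‖) :=
          mul_le_mul (hASpow m) (ContinuousLinearMap.le_opNorm _ _) (norm_nonneg _)
            (by positivity)
      _ ≤ C * θ ^ m * ‖w‖ := by
          have hθm : θS ^ m ≤ θ ^ m := pow_le_pow_left₀ hθS0 (le_max_left _ _) m
          have hCle : CS * ‖PC‖ ≤ C := by
            have h2 : 0 ≤ CU * (‖QC‖ + 1) := le_of_lt (mul_pos hCU (by positivity))
            have : CS * ‖PC‖ ≤ CS * (‖PC‖ + 1) := by nlinarith [norm_nonneg PC]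
            rw [hC]; linarith
          have h0 : 0 ≤ ‖w‖ := norm_nonneg w
          have h1 : 0 ≤ θS ^ m := pow_nonneg hθS0 m
          have h2 : 0 ≤ CS * ‖PC‖ := by positivity
          calc CS * θS ^ m * (‖PC‖ * ‖w‖) = (CS * ‖PC‖) * θS ^ m * ‖w‖ := by ring
            _ ≤ C * θ ^ m * ‖w‖ := by
                apply mul_le_mul_of_nonneg_right _ h0
                exact mul_le_mul hCle hθm h1 (le_of_lt hC0)
  · intro m
    refine ContinuousLinearMap.opNorm_le_bound _ (by positivity) fun w => ?_
    show ‖(((B ^ m) (QC w) : U) : E)‖ ≤ C * θ ^ m * ‖w‖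
    rw [Submodule.norm_coe]
    calc ‖(B ^ m) (QC w)‖ ≤ ‖B ^ m‖ * ‖QC w‖ := ContinuousLinearMap.le_opNorm _ _
      _ ≤ (CU * θU ^ m) * (‖QC‖ * ‖w‖) :=
          mul_le_mul (hBpow m) (ContinuousLinearMap.le_opNorm _ _) (norm_nonneg _)
            (by positivity)
      _ ≤ C * θ ^ m * ‖w‖ := by
          have hθm : θU ^ m ≤ θ ^ m := pow_le_pow_left₀ hθU0 (le_max_right _ _) m
          have hCle : CU * ‖QC‖ ≤ C := by
            have h2 : 0 ≤ CS * (‖PC‖ + 1) := le_of_lt (mul_pos hCS (by positivity))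
            have : CU * ‖QC‖ ≤ CU * (‖QC‖ + 1) := by nlinarith [norm_nonneg QC]
            rw [hC]; linarith
          have h0 : 0 ≤ ‖w‖ := norm_nonneg w
          have h1 : 0 ≤ θU ^ m := pow_nonneg hθU0 m
          calc CU * θU ^ m * (‖QC‖ * ‖w‖) = (CU * ‖QC‖) * θU ^ m * ‖w‖ := by ring
            _ ≤ C * θ ^ m * ‖w‖ := by
                apply mul_le_mul_of_nonneg_right _ h0
                exact mul_le_mul hCle hθm h1 (le_of_lt hC0)

end Aux

set_option maxHeartbeats 1000000 in
/-- Hyers–Ulam stability of `x_{n+1} = A x_n` on `ℂ^d` for a hyperbolic operator `A` (its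
spectrum does not intersect the unit circle): the system has the `ℓ^∞`-Lipschitz shadowing
property. -/
theorem hyperbolic_hyers_ulam
    (d : ℕ) (A : (Fin d → ℂ) →L[ℂ] (Fin d → ℂ))
    (hA : ∀ z ∈ spectrum ℂ A, ‖z‖ ≠ 1) :
    ∃ L : ℝ, 0 < L ∧ ∀ ε : ℝ, 0 < ε → ∀ y : ℕ → (Fin d → ℂ),
      (∀ n : ℕ, ‖y (n + 1) - A (y n)‖ ≤ L * ε) →
      ∃ x : ℕ → (Fin d → ℂ), (∀ n : ℕ, x (n + 1) = A (x n)) ∧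
        ∀ n : ℕ, ‖x n - y n‖ ≤ ε := by
  obtain ⟨Gp, Gm, C, θ, hC0, hθ0, hθ1, hid, hfw, hbw, hGp, hGm⟩ := exists_green A hA
  have h1θ : 0 < 1 - θ := by linarith
  set M : ℝ := 2 * C / (1 - θ) + 1 with hM
  have hM1 : 1 ≤ M := by
    have : 0 ≤ 2 * C / (1 - θ) := by positivity
    rw [hM]; linarith
  have hM0 : 0 < M := lt_of_lt_of_le one_pos hM1
  refine ⟨M⁻¹, inv_pos.mpr hM0, fun ε hε y hy => ?_⟩
  set δ : ℝ := M⁻¹ * ε with hδ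
  have hδ0 : 0 < δ := mul_pos (inv_pos.mpr hM0) hε
  set g : ℕ → (Fin d → ℂ) := fun n => y (n + 1) - A (y n) with hg
  have hgb : ∀ n, ‖g n‖ ≤ δ := hy
  have hgeom : Summable fun j : ℕ => θ ^ j := summable_geometric_of_lt_one hθ0 hθ1
  -- summability facts
  have hsumm : ∀ (c : ℕ → ℕ → ℕ) (hc : ∀ n j, j ≤ c n j) (n : ℕ),
      Summable fun j : ℕ => ‖Gm (c n j) (g (n + j))‖ := by
    intro c hc n
    apply Summable.of_nonneg_of_le (fun j => norm_nonneg _)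
      (fun j => ?_) ((hgeom.mul_left (C * δ)))
    calc ‖Gm (c n j) (g (n + j))‖ ≤ ‖Gm (c n j)‖ * ‖g (n + j)‖ :=
          ContinuousLinearMap.le_opNorm _ _
      _ ≤ (C * θ ^ (c n j)) * δ := by
          apply mul_le_mul (hGm _) (hgb _) (norm_nonneg _)
          have := pow_nonneg hθ0 (c n j)
          positivity
      _ ≤ C * δ * θ ^ j := by
          have h1 : θ ^ (c n j) ≤ θ ^ j := pow_le_pow_of_le_one hθ0 (le_of_lt hθ1) (hc n j)
          have h2 : 0 ≤ C * δ := by positivity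
          calc C * θ ^ (c n j) * δ = (C * δ) * θ ^ (c n j) := by ring
            _ ≤ (C * δ) * θ ^ j := mul_le_mul_of_nonneg_left h1 h2
  have hsumm1 : ∀ n, Summable fun j : ℕ => Gm (j + 1) (g (n + j)) := fun n =>
    Summable.of_norm (hsumm (fun _ j => j + 1) (fun _ j => Nat.le_succ j) n)
  have hsumm0 : ∀ n, Summable fun j : ℕ => Gm j (g (n + j)) := fun n =>
    Summable.of_norm (hsumm (fun _ j => j) (fun _ j => le_rfl) n)
  -- the corrector sequence
  set e : ℕ → (Fin d → ℂ) := fun n =>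
    -(∑ k ∈ Finset.range n, Gp (n - 1 - k) (g k)) + ∑' j : ℕ, Gm (j + 1) (g (n + j)) with he
  have hrec : ∀ n, e (n + 1) = A (e n) - g n := by
    intro n
    have hA1 : A (e n) = -(∑ k ∈ Finset.range n, Gp (n - k) (g k))
        + ∑' j : ℕ, Gm j (g (n + j)) := by
      rw [he]
      simp only [map_add, map_neg, map_sum]
      congr 1
      · congr 1
        apply Finset.sum_congr rfl
        intro k hk
        rw [Finset.mem_range] at hk
        have hnk : n - k = (n - 1 - k) + 1 := by omega
        rw [hnk, ← hfw]
      · rw [ContinuousLinearMap.map_tsum _ (hsumm1 n)]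
        apply tsum_congr
        intro j
        exact hbw j (g (n + j))
    have hsplit : (∑' j : ℕ, Gm j (g (n + j)))
        = Gm 0 (g n) + ∑' j : ℕ, Gm (j + 1) (g ((n + 1) + j)) := by
      rw [Summable.tsum_eq_zero_add (hsumm0 n)]
      have h1 : ∀ j : ℕ, n + (j + 1) = (n + 1) + j := fun j => by omega
      congr 1
      exact tsum_congr fun j => by rw [h1 j]
    have hsum1 : ∑ k ∈ Finset.range (n + 1), Gp (n + 1 - 1 - k) (g k)
        = (∑ k ∈ Finset.range n, Gp (n - k) (g k)) + Gp 0 (g n) := by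
      rw [Finset.sum_range_succ]
      simp [Nat.add_sub_cancel, Nat.sub_self]
    have hPQn : Gm 0 (g n) = g n - Gp 0 (g n) := eq_sub_of_add_eq' (hid (g n))
    show -(∑ k ∈ Finset.range (n + 1), Gp (n + 1 - 1 - k) (g k))
        + ∑' j : ℕ, Gm (j + 1) (g ((n + 1) + j)) = A (e n) - g n
    rw [hsum1, hA1, hsplit, hPQn]
    abel
  refine ⟨fun n => y n + e n, fun n => ?_, fun n => ?_⟩
  · show y (n + 1) + e (n + 1) = A (y n + e n)
    rw [map_add, hrec n]
    have hgn : g n = y (n + 1) - A (y n) := rfl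
    rw [hgn]
    abel
  · have hxy : y n + e n - y n = e n := by abel
    rw [hxy]
    have hterm : ∀ k : ℕ, ‖Gp (n - 1 - k) (g k)‖ ≤ (C * δ) * θ ^ (n - 1 - k) := by
      intro k
      calc ‖Gp (n - 1 - k) (g k)‖ ≤ ‖Gp (n - 1 - k)‖ * ‖g k‖ :=
            ContinuousLinearMap.le_opNorm _ _
        _ ≤ (C * θ ^ (n - 1 - k)) * δ := by
            apply mul_le_mul (hGp _) (hgb _) (norm_nonneg _)
            have := pow_nonneg hθ0 (n - 1 - k)
            positivity
        _ = (C * δ) * θ ^ (n - 1 - k) := by ring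
    have hgeomsum : ∑ k ∈ Finset.range n, θ ^ k ≤ (1 - θ)⁻¹ := by
      calc ∑ k ∈ Finset.range n, θ ^ k ≤ ∑' k : ℕ, θ ^ k :=
            Summable.sum_le_tsum _ (fun i _ => pow_nonneg hθ0 i) hgeom
        _ = (1 - θ)⁻¹ := tsum_geometric_of_lt_one hθ0 hθ1
    have hb1 : ‖∑ k ∈ Finset.range n, Gp (n - 1 - k) (g k)‖ ≤ C * δ / (1 - θ) := by
      calc ‖∑ k ∈ Finset.range n, Gp (n - 1 - k) (g k)‖
          ≤ ∑ k ∈ Finset.range n, ‖Gp (n - 1 - k) (g k)‖ := norm_sum_le _ _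
        _ ≤ ∑ k ∈ Finset.range n, (C * δ) * θ ^ (n - 1 - k) :=
            Finset.sum_le_sum fun k _ => hterm k
        _ = (C * δ) * ∑ k ∈ Finset.range n, θ ^ (n - 1 - k) := by rw [← Finset.mul_sum]
        _ = (C * δ) * ∑ k ∈ Finset.range n, θ ^ k := by
            rw [Finset.sum_range_reflect (fun k => θ ^ k) n]
        _ ≤ (C * δ) * (1 - θ)⁻¹ :=
            mul_le_mul_of_nonneg_left hgeomsum (by positivity)
        _ = C * δ / (1 - θ) := by ring
    have hterm2 : ∀ j : ℕ, ‖Gm (j + 1) (g (n + j))‖ ≤ (C * δ) * θ ^ j := by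
      intro j
      calc ‖Gm (j + 1) (g (n + j))‖ ≤ ‖Gm (j + 1)‖ * ‖g (n + j)‖ :=
            ContinuousLinearMap.le_opNorm _ _
        _ ≤ (C * θ ^ (j + 1)) * δ := by
            apply mul_le_mul (hGm _) (hgb _) (norm_nonneg _)
            have := pow_nonneg hθ0 (j + 1)
            positivity
        _ ≤ (C * δ) * θ ^ j := by
            have h1 : θ ^ (j + 1) ≤ θ ^ j :=
              pow_le_pow_of_le_one hθ0 (le_of_lt hθ1) (Nat.le_succ j)
            have h2 := mul_le_mul_of_nonneg_left h1
              (mul_nonneg (le_of_lt hC0) (le_of_lt hδ0))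
            linarith [h2]
    have hb2 : ‖∑' j : ℕ, Gm (j + 1) (g (n + j))‖ ≤ C * δ / (1 - θ) := by
      calc ‖∑' j : ℕ, Gm (j + 1) (g (n + j))‖
          ≤ ∑' j : ℕ, ‖Gm (j + 1) (g (n + j))‖ :=
            norm_tsum_le_tsum_norm (hsumm (fun _ j => j + 1) (fun _ j => Nat.le_succ j) n)
        _ ≤ ∑' j : ℕ, (C * δ) * θ ^ j :=
            Summable.tsum_le_tsum hterm2 (hsumm (fun _ j => j + 1) (fun _ j => Nat.le_succ j) n)
              (hgeom.mul_left _)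
        _ = (C * δ) * (1 - θ)⁻¹ := by
            rw [tsum_mul_left, tsum_geometric_of_lt_one hθ0 hθ1]
        _ = C * δ / (1 - θ) := by ring
    have hen : ‖e n‖ ≤ 2 * (C * δ / (1 - θ)) := by
      calc ‖e n‖ ≤ ‖-(∑ k ∈ Finset.range n, Gp (n - 1 - k) (g k))‖
            + ‖∑' j : ℕ, Gm (j + 1) (g (n + j))‖ := norm_add_le _ _
        _ ≤ C * δ / (1 - θ) + C * δ / (1 - θ) := by
            rw [norm_neg]
            exact add_le_add hb1 hb2
        _ = 2 * (C * δ / (1 - θ)) := by ring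
    have hfin : 2 * (C * δ / (1 - θ)) ≤ ε := by
      have h2 : 2 * (C * δ / (1 - θ)) = (2 * C / (1 - θ)) * M⁻¹ * ε := by
        rw [hδ]; field_simp
      have h3 : (2 * C / (1 - θ)) * M⁻¹ ≤ 1 := by
        rw [← div_eq_mul_inv, div_le_one hM0, hM]
        have : 0 ≤ 2 * C / (1 - θ) := by positivity
        linarith
      rw [h2]
      calc (2 * C / (1 - θ)) * M⁻¹ * ε ≤ 1 * ε :=
            mul_le_mul_of_nonneg_right h3 (le_of_lt hε)
        _ = ε := one_mul ε
    exact le_trans hen hfin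
end

section
/- Let d ≥ 1, let q ≥ 1, and let (A_n)_{n≥0} be a q-periodic sequence of linear operators on ℂ^d (i.e. A_{n+q} = A_n for all n ≥ 0) such that the spectrum of the product A_{q−1}⋯A_1 A_0 does not intersect the unit circle {z ∈ ℂ : |z| = 1}. Then the system x_{n+1} = A_n x_n, n ≥ 0, has the ℓ^∞-shadowing property: for every ε > 0 there exists δ > 0 such that every sequence (y_n)_{n≥0} ⊂ ℂ^d with sup_{n≥0} ‖y_{n+1} − A_n y_n‖ ≤ δ admits a sequence (x_n)_{n≥0} with x_{n+1} = A_n x_n for all n ≥ 0 and sup_{n≥0} ‖x_n − y_n‖ ≤ ε. -/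
/-!
The period map `B = A_{q-1} ⋯ A_0` is hyperbolic. A polynomial in `B` (Bezout for the factors of
the minimal polynomial with roots inside and outside the unit disc) is a projection `P` commuting
with `B`; by Gelfand's formula `B ^ j P` decays geometrically, and so do the powers of the inverse
`N` of `B` on `ker P`. The variation-of-constants sums `∑_{k<m} B ^ k P g_{m-1-k}` and
`∑_{j≥0} N ^ (j+1) g_{m+j}` then turn the defects `g` of a `δ`-pseudo-orbit of `B` into a
correction of size `O(δ)`, so pseudo-orbits of `B` are shadowed with a linear bound. Sampling a
pseudo-orbit of the periodic system at multiples of `q` gives a pseudo-orbit of `B`, and within one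
period a true orbit and a pseudo-orbit drift apart by at most a fixed multiple of `δ`.
-/

/-- The forward products `𝒜(m,n) = A_{m-1} ⋯ A_n` for `m ≥ n ≥ 0`
(equal to the identity when `m ≤ n`). -/
noncomputable def calAN (d : ℕ) (A : ℕ → (Fin d → ℂ) →L[ℂ] (Fin d → ℂ)) (m n : ℕ) :
    (Fin d → ℂ) →L[ℂ] (Fin d → ℂ) :=
  (List.range (m - n)).foldl (fun B k => (A (n + k)).comp B)
    (ContinuousLinearMap.id ℂ (Fin d → ℂ))

open Filter Asymptotics Polynomial Finset
open scoped ENNReal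

theorem exists_norm_pow_le_geometric_of_spectrum {A : Type*} [NormedRing A] [NormedAlgebra ℂ A]
    [CompleteSpace A] (a : A) (h : ∀ z ∈ spectrum ℂ a, ‖z‖ < 1) :
    ∃ C r : ℝ, 0 ≤ r ∧ r < 1 ∧ ∀ n, ‖a ^ n‖ ≤ C * r ^ n := by
  cases subsingleton_or_nontrivial A
  · exact ⟨0, 0, le_rfl, zero_lt_one, fun n => by simp [Subsingleton.elim (a ^ n) 0]⟩
  have hρ : spectralRadius ℂ a < 1 := by
    simpa using spectrum.spectralRadius_lt_of_forall_lt a (r := 1)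
      fun z hz => by simpa [← NNReal.coe_lt_coe] using h z hz
  obtain ⟨r, hρr, hr1⟩ := ENNReal.lt_iff_exists_nnreal_btwn.mp hρ
  have hr0 : (0 : ℝ) < r := by
    simpa using (bot_le (a := spectralRadius ℂ a)).trans_lt hρr
  have hO : (fun n => a ^ n) =O[atTop] fun n => (r : ℝ) ^ n := by
    refine IsBigO.of_bound 1 ?_
    have gelfand := spectrum.pow_nnnorm_pow_one_div_tendsto_nhds_spectralRadius a
    filter_upwards [gelfand.eventually_lt_const hρr, eventually_gt_atTop 0] with n hn hn0
    have : (‖a ^ n‖₊ : ℝ≥0∞) < r ^ n := by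
      simpa [← ENNReal.rpow_natCast, ← ENNReal.rpow_mul, hn0.ne'] using
        ENNReal.rpow_lt_rpow hn (Nat.cast_pos.mpr hn0)
    rw [one_mul, Real.norm_of_nonneg (by positivity)]
    exact_mod_cast this.le
  obtain ⟨C, -, hC⟩ := bound_of_isBigO_nat_atTop hO
  refine ⟨C, r, hr0.le, by exact_mod_cast hr1, fun n => ?_⟩
  simpa [abs_of_pos hr0] using hC (pow_ne_zero n hr0.ne')

namespace Module.End

theorem mem_spectrum_iff_exists_apply_eq_smul {K V : Type*} [Field K] [AddCommGroup V]
    [Module K V] [FiniteDimensional K V] {f : Module.End K V} {z : K} :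
    z ∈ spectrum K f ↔ ∃ v ≠ 0, f v = z • v := by
  rw [← hasEigenvalue_iff_mem_spectrum]
  refine ⟨fun h => ?_, fun ⟨v, hv0, hv⟩ => hasEigenvalue_of_hasEigenvector ⟨?_, hv0⟩⟩
  · obtain ⟨v, hv, hv0⟩ := h.exists_hasEigenvector
    exact ⟨v, hv0, mem_eigenspace_iff.mp hv⟩
  · exact mem_eigenspace_iff.mpr hv

/-- `P = (b * pu)(f)`, where `ps * pu = minpoly f` separates the roots in `Ω` from the others and
`a * ps + b * pu = 1`. -/
theorem exists_spectral_projection {K V : Type*} [Field K] [IsAlgClosed K]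
    [AddCommGroup V] [Module K V] [FiniteDimensional K V] (f : Module.End K V) (Ω : Set K) :
    ∃ P : Module.End K V, IsIdempotentElem P ∧ Commute f P ∧
      ∀ μ v, f v = μ • v → (μ ∈ Ω → P v = v) ∧ (μ ∉ Ω → P v = 0) := by
  classical
  set p := minpoly K f
  have hp : p.Monic := minpoly.monic (Algebra.IsIntegral.isIntegral f)
  let factor (s : Multiset K) : K[X] := (s.map fun μ => X - C μ).prod
  have eval_factor (s : Multiset K) (a : K) : (factor s).eval a = 0 ↔ a ∈ s := by
    simp [factor, eval_multiset_prod, Multiset.prod_eq_zero_iff, sub_eq_zero]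
  set ps := factor (p.roots.filter (· ∈ Ω))
  set pu := factor (p.roots.filter (· ∉ Ω))
  have hsplit : ps * pu = p := by
    rw [← prod_multiset_X_sub_C_of_monic_of_roots_card_eq hp IsAlgClosed.card_roots_eq_natDegree,
      ← Multiset.filter_add_not (· ∈ Ω) p.roots, Multiset.map_add, Multiset.prod_add]
  obtain ⟨a, b, hab⟩ : IsCoprime ps pu := by
    refine (isCoprime_iff_aeval_ne_zero_of_isAlgClosed K K ps pu).mpr fun μ => ?_
    simp only [coe_aeval_eq_eval, ne_eq, eval_factor, ps, pu, Multiset.mem_filter]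
    tauto
  refine ⟨aeval f (b * pu), ?_, ?_, fun μ v hv => ?_⟩
  · have : (b * pu) * (b * pu) = b * pu - (a * b) * p := by
      rw [← hsplit]; linear_combination (b * pu) * hab
    rw [IsIdempotentElem, ← map_mul, this, map_sub, map_mul (aeval f) (a * b), minpoly.aeval,
      mul_zero, sub_zero]
  · simpa using (Commute.all X (b * pu)).map (aeval f)
  rcases eq_or_ne v 0 with rfl | hv0
  · simp
  have hroot : μ ∈ p.roots := (mem_roots hp.ne_zero).mpr <| isRoot_of_hasEigenvalue <|
    hasEigenvalue_of_hasEigenvector ⟨mem_eigenspace_iff.mpr hv, hv0⟩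
  rw [aeval_apply_of_mem_apply_eq_smul hv]
  constructor
  · intro hμ
    have : ps.eval μ = 0 := (eval_factor _ μ).mpr (Multiset.mem_filter.mpr ⟨hroot, hμ⟩)
    have hab' := congrArg (eval μ) hab
    simp only [eval_add, eval_mul, this, mul_zero, zero_add, eval_one] at hab'
    rw [eval_mul, hab', one_smul]
  · intro hμ
    have : pu.eval μ = 0 := (eval_factor _ μ).mpr (Multiset.mem_filter.mpr ⟨hroot, hμ⟩)
    simp [this]

variable {V : Type*} [AddCommGroup V] [Module ℂ V] [FiniteDimensional ℂ V]

theorem exists_hyperbolic_projection (f : Module.End ℂ V) (hf : ∀ z ∈ spectrum ℂ f, ‖z‖ ≠ 1) :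
    ∃ P : Module.End ℂ V, IsIdempotentElem P ∧ Commute f P ∧
      ∀ (μ : ℂ) v, v ≠ 0 → f v = μ • v → (P v = v → ‖μ‖ < 1) ∧ (P v = 0 → 1 < ‖μ‖) := by
  obtain ⟨P, hP, hfP, hPv⟩ := f.exists_spectral_projection {z | ‖z‖ < 1}
  refine ⟨P, hP, hfP, fun μ v hv0 hv => ⟨fun hPv' => ?_, fun hPv' => ?_⟩⟩
  · by_contra hμ
    exact hv0 (hPv'.symm.trans ((hPv μ v hv).2 hμ))
  · have hμ : μ ∈ spectrum ℂ f := mem_spectrum_iff_exists_apply_eq_smul.mpr ⟨v, hv0, hv⟩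
    refine (hf μ hμ).symm.lt_of_le (not_lt.mp fun hlt => hv0 ?_)
    rw [← (hPv μ v hv).1 hlt, hPv']

/-- `N` inverts `f` on the unstable subspace `ker P` and vanishes on the stable one: it is
`M⁻¹ - P` for the invertible `M = f (1 - P) + P`. -/
theorem exists_hyperbolic_splitting (f : Module.End ℂ V) (hf : ∀ z ∈ spectrum ℂ f, ‖z‖ ≠ 1) :
    ∃ P N : Module.End ℂ V, f * N = 1 - P ∧ P * N = 0 ∧ Commute f P ∧ IsIdempotentElem P ∧
      (∀ z ∈ spectrum ℂ (f * P), ‖z‖ < 1) ∧ ∀ z ∈ spectrum ℂ N, ‖z‖ < 1 := by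
  obtain ⟨P, hP, hfP, hPv⟩ := f.exists_hyperbolic_projection hf
  set M := f * (1 - P) + P
  have hPM : P * M = P := by
    rw [mul_add, ← mul_assoc, ← hfP.eq, mul_assoc, mul_sub, mul_one, hP.eq, sub_self, mul_zero,
      zero_add]
  have hM : IsUnit M := by
    refine (spectrum.zero_notMem_iff ℂ).mp fun h0 => ?_
    obtain ⟨v, hv0, hv⟩ := mem_spectrum_iff_exists_apply_eq_smul.mp h0
    have hPv0 : P v = 0 := by rw [← hPM, mul_apply, hv, zero_smul, map_zero]
    have hfv : f v = (0 : ℂ) • v := by rw [← hv]; simp [M, hPv0]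
    exact ((hPv 0 v hv0 hfv).2 hPv0).not_ge (by simp)
  set N := ↑hM.unit⁻¹ - P
  have hPu : P * ↑hM.unit⁻¹ = P := by
    conv_lhs => rw [← hPM, mul_assoc, IsUnit.mul_val_inv, mul_one]
  have hMu : M * ↑hM.unit⁻¹ = 1 := hM.mul_val_inv
  have hfN : f * N = 1 - P :=
    eq_sub_of_add_eq (by simpa only [M, add_mul, sub_mul, one_mul, mul_assoc, hPu] using hMu)
  have hPN : P * N = 0 := by rw [mul_sub, hPu, hP.eq, sub_self]
  refine ⟨P, N, hfN, hPN, hfP, hP, fun z hz => ?_, fun z hz => ?_⟩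
  · obtain ⟨v, hv0, hv⟩ := mem_spectrum_iff_exists_apply_eq_smul.mp hz
    rcases eq_or_ne z 0 with rfl | hz0
    · simp
    have hPfP : P * (f * P) = f * P := by rw [← mul_assoc, ← hfP.eq, mul_assoc, hP.eq]
    have hPv' : P v = v := smul_right_injective V hz0 <| calc
      z • P v = (P * (f * P)) v := by rw [mul_apply P, hv, map_smul]
      _ = z • v := by rw [hPfP, hv]
    exact (hPv z v hv0 (by rwa [mul_apply, hPv'] at hv)).1 hPv'
  · obtain ⟨v, hv0, hv⟩ := mem_spectrum_iff_exists_apply_eq_smul.mp hz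
    rcases eq_or_ne z 0 with rfl | hz0
    · simp
    have hPv' : P v = 0 := smul_right_injective V hz0 <| calc
      z • P v = (P * N) v := by rw [mul_apply P, hv, map_smul]
      _ = z • 0 := by rw [hPN, LinearMap.zero_apply, smul_zero]
    have hfv : f v = z⁻¹ • v := by
      have hMv : M v = f v := by simp [M, hPv']
      have huv : (↑hM.unit⁻¹ : Module.End ℂ V) v = z • v := by simpa [N, hPv'] using hv
      rw [← hMv, eq_inv_smul_iff₀ hz0, ← map_smul, ← huv, ← mul_apply, hMu, one_apply]
    exact (one_lt_inv_iff₀.mp (norm_inv z ▸ (hPv _ v hv0 hfv).2 hPv')).2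

end Module.End

section Shadowing

variable {𝕜 E : Type*} [NontriviallyNormedField 𝕜] [NormedAddCommGroup E] [NormedSpace 𝕜 E]

def LipschitzShadowing (A : ℕ → E →L[𝕜] E) (L : ℝ) : Prop :=
  ∀ (δ : ℝ) (y : ℕ → E), (∀ n, ‖y (n + 1) - A n (y n)‖ ≤ δ) →
    ∃ x : ℕ → E, (∀ n, x (n + 1) = A n (x n)) ∧ ∀ n, ‖x n - y n‖ ≤ L * δ

theorem LipschitzShadowing.forall_exists_delta {A : ℕ → E →L[𝕜] E} {L : ℝ}
    (h : LipschitzShadowing A L) :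
    ∀ ε : ℝ, 0 < ε → ∃ δ : ℝ, 0 < δ ∧ ∀ y : ℕ → E, (∀ n, ‖y (n + 1) - A n (y n)‖ ≤ δ) →
      ∃ x : ℕ → E, (∀ n, x (n + 1) = A n (x n)) ∧ ∀ n, ‖x n - y n‖ ≤ ε := by
  intro ε hε
  refine ⟨ε / (|L| + 1), by positivity, fun y hy => ?_⟩
  obtain ⟨x, hx, hxy⟩ := h _ y hy
  refine ⟨x, hx, fun n => (hxy n).trans ?_⟩
  rw [mul_div_assoc', div_le_iff₀ (by positivity)]
  nlinarith [le_abs_self L]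

section Dichotomy

variable {B P N : E →L[𝕜] E} {C r δ : ℝ} {G : ℕ → E}

theorem exists_stable_correction (hs : ∀ j, ‖B ^ j * P‖ ≤ C * r ^ j) (hr₀ : 0 ≤ r) (hr₁ : r < 1)
    (hG : ∀ k, ‖G k‖ ≤ δ) :
    ∃ s : ℕ → E, (∀ m, s (m + 1) = B (s m) + P (G m)) ∧ ∀ m, ‖s m‖ ≤ C / (1 - r) * δ := by
  have hδ : 0 ≤ δ := (norm_nonneg _).trans (hG 0)
  have hC : 0 ≤ C := by simpa using (norm_nonneg _).trans (hs 0)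
  refine ⟨fun m => ∑ k ∈ range m, (B ^ k * P) (G (m - 1 - k)), fun m => ?_, fun m => ?_⟩
  · dsimp only
    rw [sum_range_succ', map_sum]
    congr 1
    refine sum_congr rfl fun k _ => ?_
    rw [pow_succ', mul_assoc, show m + 1 - 1 - (k + 1) = m - 1 - k by omega]
    rfl
  · have hsum : HasSum (fun k => C * δ * r ^ k) (C * δ * (1 - r)⁻¹) :=
      (hasSum_geometric_of_lt_one hr₀ hr₁).mul_left _
    calc ‖∑ k ∈ range m, (B ^ k * P) (G (m - 1 - k))‖
        ≤ ∑ k ∈ range m, C * δ * r ^ k := norm_sum_le_of_le _ fun k _ => by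
          calc ‖(B ^ k * P) (G (m - 1 - k))‖ ≤ C * r ^ k * δ :=
                ((B ^ k * P).le_of_opNorm_le (hs k) _).trans (by gcongr; exact hG _)
            _ = C * δ * r ^ k := by ring
      _ ≤ C * δ * (1 - r)⁻¹ := sum_le_hasSum _ (fun k _ => by positivity) hsum
      _ = C / (1 - r) * δ := by ring

theorem exists_unstable_correction [CompleteSpace E] (hBN : B * N = 1 - P) (hPN : P * N = 0)
    (hu : ∀ j, ‖N ^ j‖ ≤ C * r ^ j) (hr₀ : 0 ≤ r) (hr₁ : r < 1) (hG : ∀ k, ‖G k‖ ≤ δ) :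
    ∃ u : ℕ → E, (∀ m, u (m + 1) = B (u m) - (G m - P (G m))) ∧
      ∀ m, ‖u m‖ ≤ C / (1 - r) * δ := by
  have hδ : 0 ≤ δ := (norm_nonneg _).trans (hG 0)
  have hC : 0 ≤ C := by simpa using (norm_nonneg _).trans (hu 0)
  have hsum : HasSum (fun j => C * δ * r ^ j) (C * δ * (1 - r)⁻¹) :=
    (hasSum_geometric_of_lt_one hr₀ hr₁).mul_left _
  have hterm (m j : ℕ) : ‖(N ^ (j + 1)) (G (m + j))‖ ≤ C * δ * r ^ j :=
    calc ‖(N ^ (j + 1)) (G (m + j))‖ ≤ C * r ^ (j + 1) * δ :=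
          ((N ^ (j + 1)).le_of_opNorm_le (hu _) _).trans (by gcongr; exact hG _)
      _ ≤ C * δ * r ^ j := by
          rw [pow_succ]
          nlinarith [mul_nonneg (mul_nonneg hC hδ) (pow_nonneg hr₀ j)]
  have hsummable (m : ℕ) : Summable fun j => (N ^ (j + 1)) (G (m + j)) :=
    .of_norm_bounded hsum.summable (hterm m)
  refine ⟨fun m => ∑' j, (N ^ (j + 1)) (G (m + j)), fun m => ?_, fun m => ?_⟩
  · have hshift (j : ℕ) : B ((N ^ (j + 1)) (G (m + j))) = ((1 - P) * N ^ j) (G (m + j)) := by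
      rw [pow_succ', ← hBN, mul_assoc]; rfl
    have htail (j : ℕ) :
        ((1 - P) * N ^ (j + 1)) (G (m + (j + 1))) = (N ^ (j + 1)) (G (m + 1 + j)) := by
      rw [sub_mul, one_mul, pow_succ', ← mul_assoc P, hPN, zero_mul, sub_zero, add_comm j 1,
        add_assoc]
    have hF : Summable fun j => ((1 - P : E →L[𝕜] E) * N ^ j) (G (m + j)) :=
      (summable_nat_add_iff 1).mp <| by simpa only [htail] using hsummable (m + 1)
    dsimp only
    rw [ContinuousLinearMap.map_tsum _ (hsummable m), tsum_congr hshift, hF.tsum_eq_zero_add]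
    simp only [htail, pow_zero, mul_one, add_zero, sub_apply, one_apply_eq_self]
    abel
  · exact (tsum_of_norm_bounded hsum (hterm m)).trans_eq (by ring)

theorem lipschitzShadowing_const_of_dichotomy [CompleteSpace E] {C₁ C₂ r₁ r₂ : ℝ}
    (hBN : B * N = 1 - P) (hPN : P * N = 0) (hs : ∀ j, ‖B ^ j * P‖ ≤ C₁ * r₁ ^ j)
    (hu : ∀ j, ‖N ^ j‖ ≤ C₂ * r₂ ^ j) (hr₁ : 0 ≤ r₁) (hr₁' : r₁ < 1) (hr₂ : 0 ≤ r₂)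
    (hr₂' : r₂ < 1) :
    LipschitzShadowing (fun _ => B) (C₁ / (1 - r₁) + C₂ / (1 - r₂)) := by
  intro δ z hz
  obtain ⟨s, hs_succ, hs_le⟩ := exists_stable_correction hs hr₁ hr₁' hz
  obtain ⟨u, hu_succ, hu_le⟩ := exists_unstable_correction hBN hPN hu hr₂ hr₂' hz
  refine ⟨fun m => z m + u m - s m, fun m => ?_, fun m => ?_⟩
  · simp only [hs_succ, hu_succ, map_add, map_sub]
    abel
  · calc ‖z m + u m - s m - z m‖ = ‖u m - s m‖ := by congr 1; abel
      _ ≤ ‖u m‖ + ‖s m‖ := norm_sub_le _ _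
      _ ≤ _ := by linarith [hs_le m, hu_le m]

end Dichotomy

section Evolution

variable (A : ℕ → E →L[𝕜] E)

def evolution : ℕ → E →L[𝕜] E
  | 0 => 1
  | n + 1 => A n * evolution n

@[simp]
theorem evolution_zero : evolution A 0 = 1 := rfl

theorem evolution_succ_apply (n : ℕ) (x : E) :
    evolution A (n + 1) x = A n (evolution A n x) := rfl

theorem apply_eq_evolution_apply {x : ℕ → E} (hx : ∀ n, x (n + 1) = A n (x n)) (n : ℕ) :
    x n = evolution A n (x 0) := by
  induction n with
  | zero => rfl
  | succ n ih => rw [hx, ih, evolution_succ_apply]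

theorem evolution_const (B : E →L[𝕜] E) (n : ℕ) : evolution (fun _ => B) n = B ^ n := by
  induction n with
  | zero => rfl
  | succ n ih => rw [evolution, ih, pow_succ']

variable {A} {q : ℕ}

theorem evolution_add_of_periodic (hper : Function.Periodic A q) (n : ℕ) :
    evolution A (n + q) = evolution A n * evolution A q := by
  induction n with
  | zero => rw [zero_add, evolution_zero, one_mul]
  | succ n ih => rw [Nat.add_right_comm, evolution, ih, hper n, evolution, mul_assoc]

theorem evolution_add_mul_of_periodic (hper : Function.Periodic A q) (n m : ℕ) :
    evolution A (n + m * q) = evolution A n * evolution A q ^ m := by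
  induction m with
  | zero => rw [zero_mul, add_zero, pow_zero, mul_one]
  | succ m ih =>
    rw [Nat.succ_mul, ← add_assoc, evolution_add_of_periodic hper, ih, pow_succ, mul_assoc]

variable (A q) in
theorem exists_norm_sub_evolution_apply_le : ∃ c : ℝ, ∀ j ≤ q, ∀ (δ : ℝ) (y : ℕ → E),
    (∀ n, ‖y (n + 1) - A n (y n)‖ ≤ δ) → ‖y j - evolution A j (y 0)‖ ≤ c * δ := by
  induction q with
  | zero => exact ⟨0, fun j hj δ y _ => by simp [Nat.le_zero.mp hj]⟩
  | succ q ih =>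
    obtain ⟨c, hc⟩ := ih
    refine ⟨max c (‖A q‖ * c + 1), fun j hj δ y hy => ?_⟩
    have hδ : 0 ≤ δ := (norm_nonneg _).trans (hy 0)
    rcases Nat.le_succ_iff.mp hj with hj | rfl
    · exact (hc j hj δ y hy).trans (by gcongr; exact le_max_left _ _)
    calc ‖y (q + 1) - evolution A (q + 1) (y 0)‖
        = ‖(y (q + 1) - A q (y q)) + A q (y q - evolution A q (y 0))‖ := by
          rw [evolution_succ_apply, map_sub]; abel_nf
      _ ≤ δ + ‖A q‖ * (c * δ) :=
          norm_add_le_of_le (hy q) ((A q).le_opNorm_of_le (hc q le_rfl δ y hy))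
      _ = (‖A q‖ * c + 1) * δ := by ring
      _ ≤ _ := by gcongr; exact le_max_right _ _

theorem LipschitzShadowing.of_periodic (hq : 0 < q) (hper : Function.Periodic A q) {L : ℝ}
    (hL : LipschitzShadowing (fun _ => evolution A q) L) : ∃ L', LipschitzShadowing A L' := by
  obtain ⟨c, hc⟩ := exists_norm_sub_evolution_apply_le A q
  obtain ⟨K, hK⟩ := ((Set.finite_le_nat q).image fun j => ‖evolution A j‖).bddAbove
  have hK' (j : ℕ) (hj : j ≤ q) : ‖evolution A j‖ ≤ K := hK ⟨j, hj, rfl⟩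
  have hK₀ : 0 ≤ K := (norm_nonneg _).trans (hK' 0 q.zero_le)
  refine ⟨K * (L * c) + c, fun δ y hy => ?_⟩
  have hblock (m j : ℕ) (hj : j ≤ q) :
      ‖y (j + m * q) - evolution A j (y (m * q))‖ ≤ c * δ := by
    simpa using hc j hj δ (fun n => y (n + m * q)) fun n => by
      have hA : A (n + m * q) = A n := by simpa using hper.nat_mul m n
      simpa only [Nat.add_right_comm n 1, hA] using hy (n + m * q)
  obtain ⟨w, hw, hwy⟩ := hL (c * δ) (fun m => y (m * q)) fun m => by
    simpa [Nat.succ_mul, add_comm] using hblock m q le_rfl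
  refine ⟨fun n => evolution A n (w 0), fun n => rfl, fun n => ?_⟩
  obtain ⟨j, m, hj, rfl⟩ : ∃ j m, j < q ∧ n = j + m * q :=
    ⟨n % q, n / q, Nat.mod_lt n hq, (Nat.mod_add_div' n q).symm⟩
  have hx : evolution A (j + m * q) (w 0) = evolution A j (w m) := by
    rw [evolution_add_mul_of_periodic hper, apply_eq_evolution_apply _ hw m, evolution_const]
    rfl
  dsimp only
  rw [hx]
  calc ‖evolution A j (w m) - y (j + m * q)‖
      = ‖evolution A j (w m - y (m * q)) - (y (j + m * q) - evolution A j (y (m * q)))‖ := by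
        rw [map_sub]; abel_nf
    _ ≤ ‖evolution A j‖ * ‖w m - y (m * q)‖ + c * δ :=
        norm_sub_le_of_le ((evolution A j).le_opNorm _) (hblock m j hj.le)
    _ ≤ K * (L * (c * δ)) + c * δ := by
        gcongr ?_ + _
        exact mul_le_mul (hK' j hj.le) (hwy m) (norm_nonneg _) hK₀
    _ = (K * (L * c) + c) * δ := by ring

end Evolution

end Shadowing

theorem lipschitzShadowing_const_of_hyperbolic {E : Type*} [NormedAddCommGroup E]
    [NormedSpace ℂ E] [FiniteDimensional ℂ E] (T : E →L[ℂ] E)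
    (hT : ∀ z ∈ spectrum ℂ T, ‖z‖ ≠ 1) : ∃ L, LipschitzShadowing (fun _ => T) L := by
  set e := Module.End.toContinuousLinearMap (𝕜 := ℂ) E
  obtain ⟨f, rfl⟩ := e.surjective T
  obtain ⟨P, N, hfN, hPN, hfP, hP, hsP, hsN⟩ :=
    Module.End.exists_hyperbolic_splitting f (by rwa [AlgEquiv.spectrum_eq] at hT)
  obtain ⟨C₁, r₁, hr₁, hr₁', h₁⟩ :=
    exists_norm_pow_le_geometric_of_spectrum (e (f * P)) (by rwa [AlgEquiv.spectrum_eq])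
  obtain ⟨C₂, r₂, hr₂, hr₂', h₂⟩ :=
    exists_norm_pow_le_geometric_of_spectrum (e N) (by rwa [AlgEquiv.spectrum_eq])
  have hs (j : ℕ) : ‖e f ^ j * e P‖ ≤ C₁ * ‖e P‖ * r₁ ^ j := by
    have : e f ^ j * e P = e (f * P) ^ j * e P := by
      rw [← map_pow, ← map_pow, ← map_mul, ← map_mul, hfP.mul_pow, mul_assoc, ← pow_succ,
        hP.pow_succ_eq]
    calc ‖e f ^ j * e P‖ ≤ ‖e (f * P) ^ j‖ * ‖e P‖ := this ▸ norm_mul_le _ _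
      _ ≤ C₁ * r₁ ^ j * ‖e P‖ := by gcongr; exact h₁ j
      _ = C₁ * ‖e P‖ * r₁ ^ j := by ring
  refine ⟨_, lipschitzShadowing_const_of_dichotomy (P := e P) (N := e N) ?_ ?_ hs h₂ hr₁ hr₁' hr₂
    hr₂'⟩
  · rw [← map_mul, hfN, map_sub, map_one]
  · rw [← map_mul, hPN, map_zero]

theorem calAN_eq_evolution (d : ℕ) (A : ℕ → (Fin d → ℂ) →L[ℂ] (Fin d → ℂ)) (n : ℕ) :
    calAN d A n 0 = evolution A n := by
  induction n with
  | zero => rfl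
  | succ n ih =>
    rw [evolution, ← ih]
    simp only [calAN, zero_add, tsub_zero, List.range_succ, List.foldl_append, List.foldl_cons,
      List.foldl_nil]
    rfl

theorem periodic_hyers_ulam_general
    (d q : ℕ) (hq : 1 ≤ q)
    (A : ℕ → (Fin d → ℂ) →L[ℂ] (Fin d → ℂ))
    (hper : ∀ n : ℕ, A (n + q) = A n)
    (hA : ∀ z ∈ spectrum ℂ (calAN d A q 0), ‖z‖ ≠ 1) :
    ∀ ε : ℝ, 0 < ε → ∃ δ : ℝ, 0 < δ ∧ ∀ y : ℕ → (Fin d → ℂ),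
      (∀ n : ℕ, ‖y (n + 1) - A n (y n)‖ ≤ δ) →
      ∃ x : ℕ → (Fin d → ℂ), (∀ n : ℕ, x (n + 1) = A n (x n)) ∧
        ∀ n : ℕ, ‖x n - y n‖ ≤ ε := by
  rw [calAN_eq_evolution] at hA
  obtain ⟨L, hL⟩ := lipschitzShadowing_const_of_hyperbolic (evolution A q) hA
  obtain ⟨L', hL'⟩ := hL.of_periodic hq hper
  exact hL'.forall_exists_delta

/-- Hyers–Ulam stability for periodic systems: if `(A_n)_{n≥0}` is `q`-periodic and the
spectrum of `A_{q-1} ⋯ A_1 A_0` does not intersect the unit circle, then the system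
`x_{n+1} = A_n x_n`, `n ≥ 0`, has the `ℓ^∞`-shadowing property. -/
theorem periodic_hyers_ulam
    (d q : ℕ) (hd : 1 ≤ d) (hq : 1 ≤ q)
    (A : ℕ → (Fin d → ℂ) →L[ℂ] (Fin d → ℂ))
    (hper : ∀ n : ℕ, A (n + q) = A n)
    (hA : ∀ z ∈ spectrum ℂ (calAN d A q 0), ‖z‖ ≠ 1) :
    ∀ ε : ℝ, 0 < ε → ∃ δ : ℝ, 0 < δ ∧ ∀ y : ℕ → (Fin d → ℂ),
      (∀ n : ℕ, ‖y (n + 1) - A n (y n)‖ ≤ δ) →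
      ∃ x : ℕ → (Fin d → ℂ), (∀ n : ℕ, x (n + 1) = A n (x n)) ∧
        ∀ n : ℕ, ‖x n - y n‖ ≤ ε :=
  periodic_hyers_ulam_general d q hq A hper hA
end
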